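/- Let N ≥ 1, l_1,…,l_N positive reals summing to 1, g > 0, z_b ∈ C¹(ℝ²), and let h and 𝐮_α = (u_α, v_α) (α = 1,…,N) be C¹ on an open set Ω ⊂ ℝ_t × ℝ²_{x,y}. Set h_α = l_α h, G_{α+1/2} = − Σ_{j=1}^N ( Σ_{p=1}^α l_p − 𝟙_{j ≤ α} ) ∇_{x,y}·(h_j 𝐮_j) for 0 ≤ α ≤ N (so G_{1/2} = G_{N+1/2} = 0), and define the centered interface velocities 𝐮_{α+1/2} := (𝐮_α + 𝐮_{α+1})/2 for 1 ≤ α ≤ N−1. Assume on Ω the total mass equation ∂_t h + Σ_α ∇_{x,y}·(h_α 𝐮_α) = 0 and, for each α, the layer momentum equation ∂_t(h_α 𝐮_α) + ∇_{x,y}·(h_α 𝐮_α ⊗ 𝐮_α) + ∇_{x,y}((g/2) h h_α) = − g h_α ∇_{x,y} z_b + 𝐮_{α+1/2} G_{α+1/2} − 𝐮_{α−1/2} G_{α−1/2}. Then, with E_α := h_α|𝐮_α|²/2 + (g/2) h_α h + g h_α z_b, the total energy is exactly conserved on Ω: ∂_t Σ_{α=1}^N E_α + ∇_{x,y}· Σ_{α=1}^N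 𝐮_α ( E_α + (g/2) h_α h ) = 0. -/

import Mathlib

open MeasureTheory

/-- Partial derivative in time `t` of a function of `(t, x, y)`. -/
noncomputable def pt (f : ℝ × ℝ × ℝ → ℝ) (q : ℝ × ℝ × ℝ) : ℝ :=
  deriv (fun s => f (s, q.2.1, q.2.2)) q.1

/-- Partial derivative in `x` of a function of `(t, x, y)`. -/
noncomputable def px (f : ℝ × ℝ × ℝ → ℝ) (q : ℝ × ℝ × ℝ) : ℝ :=
  deriv (fun s => f (q.1, s, q.2.2)) q.2.1

/-- Partial derivative in `y` of a function of `(t, x, y)`. -/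
noncomputable def py (f : ℝ × ℝ × ℝ → ℝ) (q : ℝ × ℝ × ℝ) : ℝ :=
  deriv (fun s => f (q.1, q.2.1, s)) q.2.2

/-- Horizontal divergence `∇_{x,y}·F` of a horizontal vector field. -/
noncomputable def hdiv (F : ℝ × ℝ × ℝ → ℝ × ℝ) (q : ℝ × ℝ × ℝ) : ℝ :=
  px (fun p => (F p).1) q + py (fun p => (F p).2) q

/-!
Multiplying the momentum equations of layer `α` by `𝐮_α` and adding `|𝐮_α|²/2 - g (h + z_b)` times
the layer mass balance `∂_t h_α + ∇·(h_α 𝐮_α) = G_{α+1/2} - G_{α-1/2}` (the total mass equation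
combined with the definition of `G`) gives the layer energy balance
`∂_t E_α + ∇·(𝐮_α (E_α + g/2 h_α h)) = c_{α+1/2,α} G_{α+1/2} - c_{α-1/2,α} G_{α-1/2}` with
`c_{β,α} = 𝐮_β·𝐮_α - |𝐮_α|²/2 + g (h + z_b)`. For the centered choice
`𝐮_{α+1/2} = (𝐮_α + 𝐮_{α+1})/2` one has `c_{α+1/2,α} = 𝐮_α·𝐮_{α+1}/2 + g (h + z_b) = c_{α+1/2,α+1}`,
so the exchange terms cancel pairwise in the sum over the layers, and `G_{1/2} = G_{N+1/2} = 0`.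
-/

open Finset

section PartialDerivatives

variable {q : ℝ × ℝ × ℝ}

theorem pt_sum {ι : Type*} {s : Finset ι} {f : ι → ℝ × ℝ × ℝ → ℝ}
    (hf : ∀ i ∈ s, DifferentiableAt ℝ (f i) q) :
    pt (fun p => ∑ i ∈ s, f i p) q = ∑ i ∈ s, pt (f i) q := by
  obtain ⟨t, x, y⟩ := q
  exact deriv_fun_sum fun i hi => by have := hf i hi; fun_prop

theorem px_sum {ι : Type*} {s : Finset ι} {f : ι → ℝ × ℝ × ℝ → ℝ}
    (hf : ∀ i ∈ s, DifferentiableAt ℝ (f i) q) :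
    px (fun p => ∑ i ∈ s, f i p) q = ∑ i ∈ s, px (f i) q := by
  obtain ⟨t, x, y⟩ := q
  exact deriv_fun_sum fun i hi => by have := hf i hi; fun_prop

theorem py_sum {ι : Type*} {s : Finset ι} {f : ι → ℝ × ℝ × ℝ → ℝ}
    (hf : ∀ i ∈ s, DifferentiableAt ℝ (f i) q) :
    py (fun p => ∑ i ∈ s, f i p) q = ∑ i ∈ s, py (f i) q := by
  obtain ⟨t, x, y⟩ := q
  exact deriv_fun_sum fun i hi => by have := hf i hi; fun_prop

theorem hdiv_sum {ι : Type*} {s : Finset ι} {F : ι → ℝ × ℝ × ℝ → ℝ × ℝ}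
    (hF : ∀ i ∈ s, DifferentiableAt ℝ (F i) q) :
    hdiv (fun p => ∑ i ∈ s, F i p) q = ∑ i ∈ s, hdiv (F i) q := by
  simp only [hdiv, Prod.fst_sum, Prod.snd_sum, sum_add_distrib]
  rw [px_sum fun i hi => (hF i hi).fst, py_sum fun i hi => (hF i hi).snd]

end PartialDerivatives

theorem sum_Icc_one_sub {M : Type*} [AddCommGroup M] (F : ℕ → M) : ∀ N : ℕ,
    ∑ α ∈ Icc 1 N, (F α - F (α - 1)) = F N - F 0
  | 0 => by simp
  | N + 1 => by
    rw [sum_Icc_succ_top (Nat.le_add_left 1 N), sum_Icc_one_sub F N, Nat.add_sub_cancel]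
    abel

/-- `c β α` is the factor with which the exchange `G β` across the interface `β + 1/2` enters the
energy balance of the layer `α`. -/
theorem sum_interface_exchange_eq_zero {R : Type*} [Ring R] {N : ℕ} {G : ℕ → R} (c : ℕ → ℕ → R)
    (hG₀ : G 0 = 0) (hGN : G N = 0) (hc : ∀ β ∈ Icc 1 (N - 1), c β β = c β (β + 1)) :
    ∑ α ∈ Icc 1 N, (c α α * G α - c (α - 1) α * G (α - 1)) = 0 := by
  have hterm : ∀ α ∈ Icc 1 N, c α α * G α - c (α - 1) α * G (α - 1)
      = c α (α + 1) * G α - c (α - 1) (α - 1 + 1) * G (α - 1) := by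
    intro α hα
    obtain ⟨h1, hN⟩ := mem_Icc.mp hα
    rw [Nat.sub_add_cancel h1]
    rcases hN.lt_or_eq with hlt | rfl
    · rw [hc α (mem_Icc.mpr ⟨h1, by omega⟩)]
    · rw [hGN, mul_zero, mul_zero]
  rw [sum_congr rfl hterm, sum_Icc_one_sub (fun β => c β (β + 1) * G β), hGN, hG₀]
  simp

/-- The mass exchange `G_{α+1/2}`, where `d j` stands for `∇_{x,y}·(h_j 𝐮_j)`. -/
def massExchange (N : ℕ) (l d : ℕ → ℝ) (α : ℕ) : ℝ :=
  -∑ j ∈ Icc 1 N, ((∑ p ∈ Icc 1 α, l p) - if j ≤ α then (1 : ℝ) else 0) * d j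

section MassExchange

variable {N : ℕ} {l d : ℕ → ℝ}

theorem massExchange_zero : massExchange N l d 0 = 0 := by
  simp [massExchange]

theorem massExchange_self (hl : ∑ j ∈ Icc 1 N, l j = 1) : massExchange N l d N = 0 := by
  rw [massExchange, hl, neg_eq_zero]
  exact sum_eq_zero fun j hj => by rw [if_pos (mem_Icc.mp hj).2, sub_self, zero_mul]

theorem massExchange_sub_pred {α : ℕ} (hα : α ∈ Icc 1 N) :
    massExchange N l d α - massExchange N l d (α - 1) = d α - l α * ∑ j ∈ Icc 1 N, d j := by
  obtain ⟨β, rfl⟩ : ∃ β, α = β + 1 := ⟨α - 1, by have := (mem_Icc.mp hα).1; omega⟩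
  have hdα : d (β + 1) = ∑ j ∈ Icc 1 N, if β + 1 = j then d j else 0 := by
    rw [sum_ite_eq, if_pos hα]
  rw [hdα, mul_sum, ← sum_sub_distrib]
  simp only [massExchange, Nat.add_sub_cancel, sum_Icc_succ_top (Nat.le_add_left 1 β)]
  rw [neg_sub_neg, ← sum_sub_distrib]
  refine sum_congr rfl fun j _ => ?_
  split_ifs <;> first | omega | ring

end MassExchange

noncomputable def layerEnergy (g a : ℝ) (H : ℝ × ℝ × ℝ → ℝ) (w : ℝ × ℝ × ℝ → ℝ × ℝ)
    (Z : ℝ × ℝ → ℝ) (p : ℝ × ℝ × ℝ) : ℝ :=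
  a * H p * ((w p).1 ^ 2 + (w p).2 ^ 2) / 2 + g / 2 * (a * H p) * H p
    + g * (a * H p) * Z (p.2.1, p.2.2)

theorem layer_energy_balance {H : ℝ × ℝ × ℝ → ℝ} {w : ℝ × ℝ × ℝ → ℝ × ℝ} {Z : ℝ × ℝ → ℝ}
    {q : ℝ × ℝ × ℝ} {g a Gp Gm : ℝ} {wp wm : ℝ × ℝ} (hH : DifferentiableAt ℝ H q)
    (hw : DifferentiableAt ℝ w q) (hZ : DifferentiableAt ℝ Z (q.2.1, q.2.2))
    (hmx : pt (fun p => a * H p * (w p).1) q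
        + px (fun p => a * H p * (w p).1 * (w p).1) q
        + py (fun p => a * H p * (w p).2 * (w p).1) q
        + px (fun p => g / 2 * H p * (a * H p)) q
      = -(g * (a * H q) * px (fun p => Z (p.2.1, p.2.2)) q) + wp.1 * Gp - wm.1 * Gm)
    (hmy : pt (fun p => a * H p * (w p).2) q
        + px (fun p => a * H p * (w p).1 * (w p).2) q
        + py (fun p => a * H p * (w p).2 * (w p).2) q
        + py (fun p => g / 2 * H p * (a * H p)) q
      = -(g * (a * H q) * py (fun p => Z (p.2.1, p.2.2)) q) + wp.2 * Gp - wm.2 * Gm)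
    (hG : Gp - Gm = a * pt H q + hdiv (fun p => (a * H p) • w p) q) :
    pt (layerEnergy g a H w Z) q
        + hdiv (fun p => (layerEnergy g a H w Z p + g / 2 * (a * H p) * H p) • w p) q
      = (wp.1 * (w q).1 + wp.2 * (w q).2 - ((w q).1 ^ 2 + (w q).2 ^ 2) / 2
          + g * (H q + Z (q.2.1, q.2.2))) * Gp
        - (wm.1 * (w q).1 + wm.2 * (w q).2 - ((w q).1 ^ 2 + (w q).2 ^ 2) / 2
          + g * (H q + Z (q.2.1, q.2.2))) * Gm := by
  obtain ⟨t, x, y⟩ := q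
  simp only [layerEnergy, pt, px, py, hdiv, Prod.smul_fst, Prod.smul_snd, smul_eq_mul] at *
  simp (disch := fun_prop) only [deriv_div_const, deriv_fun_add, deriv_fun_mul, deriv_const,
    deriv_fun_pow] at *
  linear_combination (w (t, x, y)).1 * hmx + (w (t, x, y)).2 * hmy
    + (((w (t, x, y)).1 ^ 2 + (w (t, x, y)).2 ^ 2) / 2 - g * (H (t, x, y) + Z (x, y))) * hG

theorem stmt2_general
    (N : ℕ) (g : ℝ)
    (l : ℕ → ℝ)
    (hlsum : ∑ j ∈ Finset.Icc 1 N, l j = 1)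
    (zb : ℝ × ℝ → ℝ) (hzbC1 : ContDiff ℝ 1 zb)
    (Ω : Set (ℝ × ℝ × ℝ)) (hΩ : IsOpen Ω)
    (h : ℝ × ℝ × ℝ → ℝ) (hhC1 : ContDiffOn ℝ 1 h Ω)
    (u : ℕ → ℝ × ℝ × ℝ → ℝ × ℝ)
    (huC1 : ∀ j ∈ Finset.Icc 1 N, ContDiffOn ℝ 1 (u j) Ω)
    (hlay : ℕ → ℝ × ℝ × ℝ → ℝ)
    (hlay_def : ∀ j q, hlay j q = l j * h q)
    (G : ℕ → ℝ × ℝ × ℝ → ℝ)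
    (hG : ∀ α q, G α q = -∑ j ∈ Finset.Icc 1 N,
        ((∑ p ∈ Finset.Icc 1 α, l p) - (if j ≤ α then (1 : ℝ) else 0)) *
          hdiv (fun p => hlay j p • u j p) q)
    (uh : ℕ → ℝ × ℝ × ℝ → ℝ × ℝ)
    (huh : ∀ α ∈ Finset.Icc 1 (N - 1), ∀ q,
      uh α q = (2 : ℝ)⁻¹ • (u α q + u (α + 1) q))
    (hmass : ∀ q ∈ Ω,
      pt h q + ∑ j ∈ Finset.Icc 1 N, hdiv (fun p => hlay j p • u j p) q = 0)
    (hmom1 : ∀ α ∈ Finset.Icc 1 N, ∀ q ∈ Ω,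
      pt (fun p => hlay α p * (u α p).1) q
        + px (fun p => hlay α p * (u α p).1 * (u α p).1) q
        + py (fun p => hlay α p * (u α p).2 * (u α p).1) q
        + px (fun p => g / 2 * h p * hlay α p) q
      = -(g * hlay α q * px (fun p => zb (p.2.1, p.2.2)) q)
        + (uh α q).1 * G α q - (uh (α - 1) q).1 * G (α - 1) q)
    (hmom2 : ∀ α ∈ Finset.Icc 1 N, ∀ q ∈ Ω,
      pt (fun p => hlay α p * (u α p).2) q
        + px (fun p => hlay α p * (u α p).1 * (u α p).2) q
        + py (fun p => hlay α p * (u α p).2 * (u α p).2) q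
        + py (fun p => g / 2 * h p * hlay α p) q
      = -(g * hlay α q * py (fun p => zb (p.2.1, p.2.2)) q)
        + (uh α q).2 * G α q - (uh (α - 1) q).2 * G (α - 1) q)
    (E : ℕ → ℝ × ℝ × ℝ → ℝ)
    (hE : ∀ α q, E α q = hlay α q * ((u α q).1 ^ 2 + (u α q).2 ^ 2) / 2
        + g / 2 * hlay α q * h q + g * hlay α q * zb (q.2.1, q.2.2)) :
    ∀ q ∈ Ω,
      pt (fun p => ∑ α ∈ Finset.Icc 1 N, E α p) q
        + hdiv (fun p => ∑ α ∈ Finset.Icc 1 N,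
            (E α p + g / 2 * hlay α p * h p) • u α p) q
      = 0 := by
  obtain rfl : hlay = fun j p => l j * h p := funext₂ hlay_def
  obtain rfl : E = fun α => layerEnergy g (l α) h (u α) zb := funext₂ hE
  intro q hq
  have hq' : Ω ∈ nhds q := hΩ.mem_nhds hq
  have hh : DifferentiableAt ℝ h q := (hhC1.differentiableOn one_ne_zero).differentiableAt hq'
  have hu : ∀ α ∈ Icc 1 N, DifferentiableAt ℝ (u α) q := fun α hα =>
    ((huC1 α hα).differentiableOn one_ne_zero).differentiableAt hq'
  have hz : DifferentiableAt ℝ zb (q.2.1, q.2.2) := hzbC1.differentiable one_ne_zero _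
  have hEdiff : ∀ α ∈ Icc 1 N, DifferentiableAt ℝ (layerEnergy g (l α) h (u α) zb) q :=
    fun α hα => by have := hu α hα; unfold layerEnergy; fun_prop
  set d : ℕ → ℝ := fun j => hdiv (fun p => (l j * h p) • u j p) q
  have hGd : ∀ α, G α q = massExchange N l d α := fun α => hG α q
  have hGstep : ∀ α ∈ Icc 1 N, G α q - G (α - 1) q = l α * pt h q + d α := fun α hα => by
    rw [hGd, hGd, massExchange_sub_pred hα]
    linear_combination (-l α) * hmass q hq
  rw [pt_sum hEdiff, hdiv_sum fun α hα => by have := hu α hα; have := hEdiff α hα; fun_prop,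
    ← sum_add_distrib, sum_congr rfl fun α hα => layer_energy_balance hh (hu α hα) hz
      (hmom1 α hα q hq) (hmom2 α hα q hq) (hGstep α hα)]
  refine sum_interface_exchange_eq_zero (fun β α => (uh β q).1 * (u α q).1 + (uh β q).2 * (u α q).2
      - ((u α q).1 ^ 2 + (u α q).2 ^ 2) / 2 + g * (h q + zb (q.2.1, q.2.2)))
    (by rw [hGd, massExchange_zero]) (by rw [hGd, massExchange_self hlsum]) fun β hβ => ?_
  rw [huh β hβ q]
  simp only [Prod.smul_fst, Prod.smul_snd, Prod.fst_add, Prod.snd_add, smul_eq_mul]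
  ring

/-- exact global energy conservation of the layer-averaged
hydrostatic Euler system with the centered interface velocities. -/
theorem stmt2
    (N : ℕ) (hN : 1 ≤ N) (g : ℝ) (hg : 0 < g)
    (l : ℕ → ℝ) (hl : ∀ j ∈ Finset.Icc 1 N, 0 < l j)
    (hlsum : ∑ j ∈ Finset.Icc 1 N, l j = 1)
    (zb : ℝ × ℝ → ℝ) (hzbC1 : ContDiff ℝ 1 zb)
    (Ω : Set (ℝ × ℝ × ℝ)) (hΩ : IsOpen Ω)
    (h : ℝ × ℝ × ℝ → ℝ) (hhC1 : ContDiffOn ℝ 1 h Ω)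
    (u : ℕ → ℝ × ℝ × ℝ → ℝ × ℝ)
    (huC1 : ∀ j ∈ Finset.Icc 1 N, ContDiffOn ℝ 1 (u j) Ω)
    (hlay : ℕ → ℝ × ℝ × ℝ → ℝ)
    (hlay_def : ∀ j q, hlay j q = l j * h q)
    (G : ℕ → ℝ × ℝ × ℝ → ℝ)
    (hG : ∀ α q, G α q = -∑ j ∈ Finset.Icc 1 N,
        ((∑ p ∈ Finset.Icc 1 α, l p) - (if j ≤ α then (1 : ℝ) else 0)) *
          hdiv (fun p => hlay j p • u j p) q)
    (uh : ℕ → ℝ × ℝ × ℝ → ℝ × ℝ)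
    (huh : ∀ α ∈ Finset.Icc 1 (N - 1), ∀ q,
      uh α q = (2 : ℝ)⁻¹ • (u α q + u (α + 1) q))
    (hmass : ∀ q ∈ Ω,
      pt h q + ∑ j ∈ Finset.Icc 1 N, hdiv (fun p => hlay j p • u j p) q = 0)
    (hmom1 : ∀ α ∈ Finset.Icc 1 N, ∀ q ∈ Ω,
      pt (fun p => hlay α p * (u α p).1) q
        + px (fun p => hlay α p * (u α p).1 * (u α p).1) q
        + py (fun p => hlay α p * (u α p).2 * (u α p).1) q
        + px (fun p => g / 2 * h p * hlay α p) q
      = -(g * hlay α q * px (fun p => zb (p.2.1, p.2.2)) q)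
        + (uh α q).1 * G α q - (uh (α - 1) q).1 * G (α - 1) q)
    (hmom2 : ∀ α ∈ Finset.Icc 1 N, ∀ q ∈ Ω,
      pt (fun p => hlay α p * (u α p).2) q
        + px (fun p => hlay α p * (u α p).1 * (u α p).2) q
        + py (fun p => hlay α p * (u α p).2 * (u α p).2) q
        + py (fun p => g / 2 * h p * hlay α p) q
      = -(g * hlay α q * py (fun p => zb (p.2.1, p.2.2)) q)
        + (uh α q).2 * G α q - (uh (α - 1) q).2 * G (α - 1) q)
    (E : ℕ → ℝ × ℝ × ℝ → ℝ)
    (hE : ∀ α q, E α q = hlay α q * ((u α q).1 ^ 2 + (u α q).2 ^ 2) / 2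
        + g / 2 * hlay α q * h q + g * hlay α q * zb (q.2.1, q.2.2)) :
    ∀ q ∈ Ω,
      pt (fun p => ∑ α ∈ Finset.Icc 1 N, E α p) q
        + hdiv (fun p => ∑ α ∈ Finset.Icc 1 N,
            (E α p + g / 2 * hlay α p * h p) • u α p) q
      = 0 :=
  stmt2_general N g l hlsum zb hzbC1 Ω hΩ h hhC1 u huC1 hlay hlay_def G hG uh huh hmass hmom1 hmom2
    E hE
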